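/- Let T be a recursively pointed function tree. Then for every Y ∈ 2^ω, T ≤_T Y if and only if there exists X ∈ [T] with X ≡_T Y. -/

import Mathlib

open scoped ENNReal

attribute [local instance] Classical.propDecidable

/-- Cantor space `2^ω`. -/
abbrev Cantor := ℕ → Bool

/-- The length-`n` initial segment `X↾n` of `X ∈ 2^ω`, as a finite binary string. -/
def seg (X : Cantor) (n : ℕ) : List Bool := (List.range n).map X

/-- `σ ≺ X` : the finite string `σ` is an initial segment of `X`. -/
def PrefixOfSeq (σ : List Bool) (X : Cantor) : Prop := seg X σ.length = σ

/-- The basic clopen set `[σ]` of all infinite sequences extending `σ`. -/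
def cyl (σ : List Bool) : Set Cantor := {X | PrefixOfSeq σ X}

/-- Partial recursive functions relative to a (total) oracle `O : ℕ → ℕ`:
the oracle version of `Nat.Partrec`. -/
inductive OracleRecursiveIn (O : ℕ → ℕ) : (ℕ →. ℕ) → Prop
  | oracle : OracleRecursiveIn O (fun n => Part.some (O n))
  | zero : OracleRecursiveIn O (pure 0)
  | succ : OracleRecursiveIn O Nat.succ
  | left : OracleRecursiveIn O ↑fun n : ℕ => n.unpair.1
  | right : OracleRecursiveIn O ↑fun n : ℕ => n.unpair.2
  | pair {f g} : OracleRecursiveIn O f → OracleRecursiveIn O g →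
      OracleRecursiveIn O fun n => Nat.pair <$> f n <*> g n
  | comp {f g} : OracleRecursiveIn O f → OracleRecursiveIn O g →
      OracleRecursiveIn O fun n => g n >>= f
  | prec {f g} : OracleRecursiveIn O f → OracleRecursiveIn O g →
      OracleRecursiveIn O (Nat.unpaired fun a n =>
        n.rec (f a) fun y IH => do let i ← IH; g (Nat.pair a (Nat.pair y i)))
  | rfind {f} : OracleRecursiveIn O f →
      OracleRecursiveIn O fun a => Nat.rfind fun n => (fun m => m = 0) <$> f (Nat.pair a n)

/-- A (total) function between coded types is recursive in the oracle `O`. -/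
def RecIn {α β : Type} [Primcodable α] [Primcodable β] (O : ℕ → ℕ) (f : α → β) : Prop :=
  OracleRecursiveIn O fun n =>
    (Part.ofOption (Encodable.decode (α := α) n)).bind fun a => Part.some (Encodable.encode (f a))

/-- A set `X ∈ 2^ω` viewed as a total oracle. -/
def oracleOf (X : Cantor) : ℕ → ℕ := fun n => cond (X n) 1 0

/-- A function between coded types viewed as a total oracle on `ℕ`. -/
def oracleFn {α β : Type} [Primcodable α] [Primcodable β] (f : α → β) : ℕ → ℕ :=
  fun n => Encodable.encode ((Encodable.decode (α := α) n).map f)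

/-- Turing reducibility `X ≤_T Y` between elements of `2^ω`. -/
def TRed (X Y : Cantor) : Prop := RecIn (oracleOf Y) X

/-- Turing equivalence `X ≡_T Y`. -/
def TEquiv (X Y : Cantor) : Prop := TRed X Y ∧ TRed Y X

/-- The Turing degree of `Z`, as a set of reals. -/
def degCl (Z : Cantor) : Set Cantor := {Y | TEquiv Y Z}

/-- Many-one reducibility `X ≤_m Y` between subsets of `ω` (as elements of `2^ω`). -/
def ManyOneRed (X Y : Cantor) : Prop := ∃ g : ℕ → ℕ, Computable g ∧ ∀ n, X n = Y (g n)

/-- The recursive join `A ⊕ B`. -/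
def join (A B : Cantor) : Cantor := fun n => if n % 2 = 0 then A (n / 2) else B (n / 2)

/-- `X` is of minimal Turing degree. -/
def MinimalDeg (X : Cantor) : Prop :=
  ¬Computable X ∧ ∀ Y : Cantor, TRed Y X → Computable Y ∨ TRed X Y

/-- `B` is a minimal cover of the countable class `S`: `B` strictly bounds every member of `S`,
and everything below `B` is either below some member of `S` or joins with one above `B`. -/
def MinimalCoverOf (B : Cantor) (S : Set Cantor) : Prop :=
  (∀ A ∈ S, TRed A B ∧ ¬TRed B A) ∧
  ∀ C : Cantor, TRed C B → ∃ A ∈ S, TRed C A ∨ TRed B (join A C)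

/-- `R` is of hyperimmune-free degree: every function it computes is dominated by a
computable function. -/
def HypImmFree (R : Cantor) : Prop :=
  ∀ f : ℕ → ℕ, RecIn (oracleOf R) f → ∃ g : ℕ → ℕ, Computable g ∧ ∀ n, f n ≤ g n

/-- `d` is a supermartingale. -/
def IsSupermartingale (d : List Bool → ℝ) : Prop :=
  (∀ σ, 0 ≤ d σ) ∧ ∀ σ, d (σ ++ [false]) + d (σ ++ [true]) ≤ 2 * d σ

/-- `d` is a martingale. -/
def IsMartingale (d : List Bool → ℝ) : Prop :=
  (∀ σ, 0 ≤ d σ) ∧ ∀ σ, d (σ ++ [false]) + d (σ ++ [true]) = 2 * d σ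

/-- `d` is lower semicomputable (r.e.) relative to oracle `O`: it is the monotone limit of a
uniformly `O`-recursive sequence of rationals. -/
def LowerSemicomputableIn (O : ℕ → ℕ) (d : List Bool → ℝ) : Prop :=
  ∃ q : List Bool × ℕ → ℚ, RecIn O q ∧ (∀ σ, Monotone fun n => q (σ, n)) ∧
    ∀ σ, Filter.Tendsto (fun n => (q (σ, n) : ℝ)) Filter.atTop (nhds (d σ))

/-- `d` is lower semicomputable (an r.e. supermartingale value function). -/
def LowerSemicomputable (d : List Bool → ℝ) : Prop :=
  ∃ q : List Bool × ℕ → ℚ, Computable q ∧ (∀ σ, Monotone fun n => q (σ, n)) ∧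
    ∀ σ, Filter.Tendsto (fun n => (q (σ, n) : ℝ)) Filter.atTop (nhds (d σ))

/-- `d` `s`-succeeds on `X`: `limsup_n d(X↾n)/2^{(1-s)n} = ∞`
(equivalently, the sequence is unbounded). -/
def Succeeds (d : List Bool → ℝ) (s : ℚ) (X : Cantor) : Prop :=
  ∀ C : ℝ, ∃ n : ℕ, C * (2 : ℝ) ^ ((1 - (s : ℝ)) * n) ≤ d (seg X n)

/-- `d` strongly `s`-succeeds on `X`: `liminf_n d(X↾n)/2^{(1-s)n} = ∞`. -/
def SucceedsStrongly (d : List Bool → ℝ) (s : ℚ) (X : Cantor) : Prop :=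
  ∀ C : ℝ, ∃ N : ℕ, ∀ n ≥ N, C * (2 : ℝ) ^ ((1 - (s : ℝ)) * n) ≤ d (seg X n)

/-- Generic dimension notion: the infimum of all `s ∈ ℚ ∩ [0,1]` such that some supermartingale
satisfying `P` succeeds (in the sense of `Succ`) on every member of `A` (with value `1` if there
is no such `s`). -/
noncomputable def dimVia (P : (List Bool → ℝ) → Prop)
    (Succ : (List Bool → ℝ) → ℚ → Cantor → Prop) (A : Set Cantor) : ℝ≥0∞ :=
  sInf ({1} ∪ {x : ℝ≥0∞ | ∃ s : ℚ, 0 ≤ s ∧ s ≤ 1 ∧ x = ENNReal.ofReal (s : ℝ) ∧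
    ∃ d, IsSupermartingale d ∧ P d ∧ ∀ X ∈ A, Succ d s X})

/-- Effective Hausdorff dimension of a class (Lutz). -/
noncomputable def effDim (A : Set Cantor) : ℝ≥0∞ := dimVia LowerSemicomputable Succeeds A

/-- Effective Hausdorff dimension relative to oracle `O`. -/
noncomputable def effDimIn (O : ℕ → ℕ) (A : Set Cantor) : ℝ≥0∞ :=
  dimVia (LowerSemicomputableIn O) Succeeds A

/-- Effective packing dimension of a class. -/
noncomputable def effPDim (A : Set Cantor) : ℝ≥0∞ := dimVia LowerSemicomputable SucceedsStrongly A

/-- Effective packing dimension relative to oracle `O`. -/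
noncomputable def effPDimIn (O : ℕ → ℕ) (A : Set Cantor) : ℝ≥0∞ :=
  dimVia (LowerSemicomputableIn O) SucceedsStrongly A

/-- (Classical) Hausdorff dimension of a subset of `2^ω`, via the point-to-set principle:
the infimum over all oracles `Z` of the effective-in-`Z` Hausdorff dimension. -/
noncomputable def hausdorffDim (A : Set Cantor) : ℝ≥0∞ := ⨅ Z : Cantor, effDimIn (oracleOf Z) A

/-- (Classical) packing dimension of a subset of `2^ω`, via the point-to-set principle. -/
noncomputable def packingDim (A : Set Cantor) : ℝ≥0∞ := ⨅ Z : Cantor, effPDimIn (oracleOf Z) A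

/-- The canonical enumeration `n ↦ D_n` of finite subsets of `ω`: `D_n` is the set of
positions of 1-bits in the binary expansion of `n`. -/
def Dfin (n : ℕ) : Finset ℕ := (Finset.range n).filter fun i => n.testBit i = true

/-- `A` is recursively traceable. -/
def RecTraceable (A : Cantor) : Prop :=
  ∃ b : ℕ → ℕ, Computable b ∧ ∀ f : ℕ → ℕ, RecIn (oracleOf A) f →
    ∃ g : ℕ → ℕ, Computable g ∧ ∀ n, (Dfin (g n)).card ≤ b n ∧ f n ∈ Dfin (g n)

/-- A function tree: `T(σi)` properly extends `T(σ)`, and `T(σ0)`, `T(σ1)` are incomparable. -/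
structure FunTree where
  f : List Bool → List Bool
  extend : ∀ σ (i : Bool), f σ <+: f (σ ++ [i]) ∧ (f σ).length < (f (σ ++ [i])).length
  split : ∀ σ, ¬ f (σ ++ [false]) <+: f (σ ++ [true]) ∧ ¬ f (σ ++ [true]) <+: f (σ ++ [false])

/-- `[T]`, the set of infinite paths through the function tree `T`. -/
def Paths (T : FunTree) : Set Cantor :=
  {X | ∃ Y : Cantor, ∀ n, PrefixOfSeq (T.f (seg Y n)) X}

/-- `T ≤_T Y` for a function tree `T` and a real `Y`. -/
def TreeRedToReal (T : FunTree) (Y : Cantor) : Prop := RecIn (oracleOf Y) T.f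

/-- `Y ≤_T T` for a real `Y` and a function tree `T` (the tree used as an oracle). -/
def RealRedToTree (Y : Cantor) (T : FunTree) : Prop := RecIn (oracleFn T.f) Y

/-- `S ≤_T T` between function trees. -/
def TreeRedToTree (S T : FunTree) : Prop := RecIn (oracleFn T.f) S.f

/-- `T` is recursively pointed: every path of `T` computes `T`. -/
def RecPointed (T : FunTree) : Prop := ∀ X ∈ Paths T, TreeRedToReal T X

/-- The binary value of a string (read most-significant-bit first); strings of equal
length are lexicographically ordered exactly as their values. -/
def natOfStr (σ : List Bool) : ℕ := σ.foldl (fun a b => 2 * a + cond b 1 0) 0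

/-- The length-`len` binary string with value `k`. -/
def strOfNat (len k : ℕ) : List Bool := (List.range len).map fun i => k.testBit (len - 1 - i)

/-- `l(σ) = Σ_{|τ|=|σ|, τ <_L σ} ν([τ])`, computed via the value correspondence between the
lexicographic order on strings of equal length and the numeric order of their values. -/
noncomputable def lfun (ν : MeasureTheory.Measure Cantor) (σ : List Bool) : ℝ :=
  ∑ k ∈ Finset.range (natOfStr σ), (ν (cyl (strOfNat σ.length k))).toReal

/-- `r(σ) = l(σ) + ν([σ])`. -/
noncomputable def rfun (ν : MeasureTheory.Measure Cantor) (σ : List Bool) : ℝ :=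
  lfun ν σ + (ν (cyl σ)).toReal

/-- `0.A`: the real number in `[0,1]` with binary expansion `A`. -/
noncomputable def realOf (A : Cantor) : ℝ := ∑' n : ℕ, cond (A n) ((2 : ℝ)⁻¹ ^ (n + 1)) 0

/-- The weight `2^{-|σ|}` of an (optional) string, for measuring Martin-Löf tests. -/
noncomputable def testWeight : Option (List Bool) → ℝ≥0∞
  | none => 0
  | some σ => (2 : ℝ≥0∞)⁻¹ ^ σ.length

/-- `V` is a Martin-Löf test: a uniformly computable enumeration whose `n`-th level has
total weight at most `2^{-n}`. -/
def MLTest (V : ℕ × ℕ → Option (List Bool)) : Prop :=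
  Computable V ∧ ∀ n, (∑' k : ℕ, testWeight (V (n, k))) ≤ (2 : ℝ≥0∞)⁻¹ ^ n

/-- `X` is covered by the test `V` (belongs to every level). -/
def MLCovered (V : ℕ × ℕ → Option (List Bool)) (X : Cantor) : Prop :=
  ∀ n, ∃ k σ, V (n, k) = some σ ∧ PrefixOfSeq σ X

/-- `X` is 1-random (Martin-Löf random). -/
def MLRandom (X : Cantor) : Prop := ∀ V, MLTest V → ¬MLCovered V X

/-- An antichain of Turing degrees (containing no computable set, closed under Turing
equivalence, with Turing-inequivalent members pairwise incomparable). -/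
def IsAntichainDeg (B : Set Cantor) : Prop :=
  (∀ X ∈ B, ¬Computable X) ∧ (∀ X ∈ B, ∀ Y, TEquiv Y X → Y ∈ B) ∧
  ∀ X ∈ B, ∀ Y ∈ B, ¬TEquiv X Y → ¬TRed X Y ∧ ¬TRed Y X

/-- A maximal antichain of Turing degrees. -/
def MaximalAntichainDeg (B : Set Cantor) : Prop :=
  IsAntichainDeg B ∧ ∀ Z ∉ B, ¬IsAntichainDeg (B ∪ degCl Z)

/-- A chain of Turing degrees. -/
def IsChainDeg (A : Set Cantor) : Prop :=
  (∀ X ∈ A, ∀ Y, TEquiv Y X → Y ∈ A) ∧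
  ∀ X ∈ A, ∀ Y ∈ A, ¬TEquiv X Y → TRed X Y ∨ TRed Y X

/-- A maximal chain of Turing degrees. -/
def MaximalChainDeg (A : Set Cantor) : Prop :=
  IsChainDeg A ∧ ∀ Z ∉ A, ¬IsChainDeg (A ∪ degCl Z)

/-- The first uncountable ordinal `ω₁`. -/
noncomputable def omega1 : Ordinal := (Cardinal.aleph 1).ord

/-!
If `T ≤_T Y`, the path of `T` that follows the directions `Y` (the union of the strings
`T(Y↾n)`) is computable from `Y`. Conversely, from this path `X` and from `T` one recovers `Y`
bit by bit: `Y(n) = 1` iff `T((Y↾n)1) ≺ X`, because `T(σ0)` and `T(σ1)` are incomparable. As `T`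
is recursively pointed, `T ≤_T X`, hence `Y ≤_T X`. The reverse implication is transitivity:
`T ≤_T X ≤_T Y`.
-/

namespace OracleRecursiveIn

variable {O : ℕ → ℕ}

theorem of_eq {f g : ℕ →. ℕ} (hf : OracleRecursiveIn O f) (H : ∀ n, f n = g n) :
    OracleRecursiveIn O g :=
  funext H ▸ hf

theorem of_partrec {f : ℕ →. ℕ} (hf : Nat.Partrec f) : OracleRecursiveIn O f := by
  induction hf with
  | zero => exact .zero
  | succ => exact .succ
  | left => exact .left
  | right => exact .right
  | pair _ _ hf hg => exact .pair hf hg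
  | comp _ _ hf hg => exact .comp hf hg
  | prec _ _ hf hg => exact .prec hf hg
  | rfind _ hf => exact .rfind hf

theorem subst {O' : ℕ → ℕ} {f : ℕ →. ℕ} (hf : OracleRecursiveIn O f)
    (hO : OracleRecursiveIn O' fun n => Part.some (O n)) : OracleRecursiveIn O' f := by
  induction hf with
  | oracle => exact hO
  | zero => exact .zero
  | succ => exact .succ
  | left => exact .left
  | right => exact .right
  | pair _ _ hf hg => exact .pair hf hg
  | comp _ _ hf hg => exact .comp hf hg
  | prec _ _ hf hg => exact .prec hf hg
  | rfind _ hf => exact .rfind hf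

end OracleRecursiveIn

namespace RecIn

open Encodable

variable {O : ℕ → ℕ} {α β γ σ : Type} [Primcodable α] [Primcodable β] [Primcodable γ]
  [Primcodable σ]

theorem of_eq {f g : α → σ} (hf : RecIn O f) (H : ∀ a, f a = g a) : RecIn O g :=
  funext H ▸ hf

theorem of_computable {f : α → σ} (hf : Computable f) : RecIn O f :=
  OracleRecursiveIn.of_partrec hf

theorem comp {f : β → σ} {g : α → β} (hf : RecIn O f) (hg : RecIn O g) :
    RecIn O fun a => f (g a) :=
  (OracleRecursiveIn.comp hf hg).of_eq fun n => by
    cases decode (α := α) n <;> simp [encodek]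

theorem pair {f : α → β} {g : α → γ} (hf : RecIn O f) (hg : RecIn O g) :
    RecIn O fun a => (f a, g a) :=
  (OracleRecursiveIn.pair hf hg).of_eq fun n => by
    cases decode (α := α) n <;> simp [Seq.seq]

theorem nat_rec {f : α → ℕ} {g : α → σ} {h : α → ℕ × σ → σ} (hf : RecIn O f) (hg : RecIn O g)
    (hh : RecIn O fun p : α × (ℕ × σ) => h p.1 p.2) :
    RecIn O fun a => Nat.rec (motive := fun _ => σ) (g a) (fun y IH => h a (y, IH)) (f a) :=
  ((OracleRecursiveIn.prec hg hh).comp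
      (.pair (.of_partrec Nat.Partrec.some) hf)).of_eq fun n => by
    cases e : decode (α := α) n with
    | none => simp [Seq.seq]
    | some a =>
      simp only [e, Seq.seq, Part.map_eq_map, Part.map_some, Part.coe_some, Part.bind_some,
        Part.bind_eq_bind, encode_nat, decode_nat, decode_prod_val, Nat.unpaired,
        Nat.unpair_pair, Option.bind_some, Option.map_map]
      induction f a <;> simp [*]

theorem iterate {f : σ → σ} (hf : RecIn O f) (x : σ) : RecIn O fun n => f^[n] x :=
  (nat_rec (f := id) (g := fun _ => x) (h := fun _ p => f p.2) (of_computable .id)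
      (of_computable (.const x)) (hf.comp (of_computable (Computable.snd.comp .snd)))).of_eq
    fun n => by
      induction n with
      | zero => rfl
      | succ n ih => rw [Function.iterate_succ_apply', ← ih]; rfl

theorem oracle (X : Cantor) : RecIn (oracleOf X) X :=
  OracleRecursiveIn.oracle.of_eq fun n => by
    cases h : X n <;> simp [oracleOf, h, Part.ofOption]

theorem trans {f : α → σ} {X Y : Cantor} (hf : RecIn (oracleOf X) f) (hXY : TRed X Y) :
    RecIn (oracleOf Y) f :=
  hf.subst <| OracleRecursiveIn.of_eq hXY fun n => by
    cases h : X n <;> simp [oracleOf, h, Part.ofOption]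

end RecIn

section Cantor

variable {X : Cantor} {σ τ : List Bool}

@[simp]
theorem seg_length (X : Cantor) (n : ℕ) : (seg X n).length = n := by
  simp [seg]

@[simp]
theorem getElem_seg (X : Cantor) {n i : ℕ} (h : i < (seg X n).length) : (seg X n)[i] = X i := by
  simp [seg]

theorem seg_succ (X : Cantor) (n : ℕ) : seg X (n + 1) = seg X n ++ [X n] := by
  simp [seg, List.range_succ]

theorem seg_prefix_seg (X : Cantor) {m n : ℕ} (h : m ≤ n) : seg X m <+: seg X n := by
  induction n, h using Nat.le_induction with
  | base => exact List.prefix_refl _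
  | succ n _ ih => exact ih.trans (seg_succ X n ▸ List.prefix_append _ _)

theorem PrefixOfSeq.prefix_or_prefix (hσ : PrefixOfSeq σ X) (hτ : PrefixOfSeq τ X) :
    σ <+: τ ∨ τ <+: σ := by
  rw [PrefixOfSeq] at hσ hτ
  rcases le_total σ.length τ.length with h | h
  · exact .inl (hσ ▸ hτ ▸ seg_prefix_seg X h)
  · exact .inr (hσ ▸ hτ ▸ seg_prefix_seg X h)

theorem seg_eq_iterate {b : List Bool → Bool} (hX : ∀ n, X n = b (seg X n)) (n : ℕ) :
    seg X n = (fun σ => σ ++ [b σ])^[n] [] := by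
  induction n with
  | zero => rfl
  | succ n ih => rw [Function.iterate_succ_apply', ← ih, seg_succ, hX]

variable {O : ℕ → ℕ} {b : List Bool → Bool}

theorem recIn_seg_of_forall_eq (hb : RecIn O b) (hX : ∀ n, X n = b (seg X n)) :
    RecIn O (seg X) :=
  (RecIn.iterate ((RecIn.of_computable Computable.list_concat).comp (.pair (.of_computable .id) hb))
    []).of_eq fun n => (seg_eq_iterate hX n).symm

theorem recIn_of_forall_eq (hb : RecIn O b) (hX : ∀ n, X n = b (seg X n)) : RecIn O X :=
  (hb.comp (recIn_seg_of_forall_eq hb hX)).of_eq fun n => (hX n).symm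

theorem recIn_seg (hX : RecIn O X) : RecIn O (seg X) :=
  recIn_seg_of_forall_eq (b := fun σ => X σ.length)
    (hX.comp (.of_computable Computable.list_length)) fun n => by rw [seg_length]

theorem recIn_decide_prefixOfSeq (X : Cantor) :
    RecIn (oracleOf X) fun σ => decide (PrefixOfSeq σ X) :=
  ((RecIn.of_computable Primrec.eq.decide.to_comp).comp
    (.pair ((recIn_seg (.oracle X)).comp (.of_computable Computable.list_length))
      (.of_computable .id))).of_eq fun σ => by
    simp only [PrefixOfSeq]; congr

end Cantor

namespace FunTree

variable (T : FunTree) (Y : Cantor)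

theorem not_prefix_or_prefix_of_ne (σ : List Bool) {b c : Bool} (h : b ≠ c) :
    ¬(T.f (σ ++ [b]) <+: T.f (σ ++ [c]) ∨ T.f (σ ++ [c]) <+: T.f (σ ++ [b])) := by
  have := T.split σ
  cases b <;> cases c <;> simp_all

theorem f_seg_prefix {m n : ℕ} (h : m ≤ n) : T.f (seg Y m) <+: T.f (seg Y n) := by
  induction n, h using Nat.le_induction with
  | base => exact List.prefix_refl _
  | succ n _ ih => exact ih.trans (seg_succ Y n ▸ (T.extend _ (Y n)).1)

theorem le_length_f_seg : ∀ n, n ≤ (T.f (seg Y n)).length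
  | 0 => Nat.zero_le _
  | n + 1 => by
    have := seg_succ Y n ▸ (T.extend (seg Y n) (Y n)).2
    have := le_length_f_seg n
    omega

-- `T(Y↾(m+1))` has length `> m` (`le_length_f_seg`), so the default `false` never occurs.
def path : Cantor := fun m => (T.f (seg Y (m + 1))).getD m false

theorem prefixOfSeq_path (n : ℕ) : PrefixOfSeq (T.f (seg Y n)) (T.path Y) := by
  refine List.ext_getElem (by simp) fun i hi hn => ?_
  have hi' : i < (T.f (seg Y (i + 1))).length := T.le_length_f_seg Y (i + 1)
  rw [getElem_seg, path, List.getD_eq_getElem _ _ hi']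
  rcases le_total (i + 1) n with h | h
  · exact (T.f_seg_prefix Y h).getElem hi'
  · exact ((T.f_seg_prefix Y h).getElem hn).symm

theorem path_mem_paths : T.path Y ∈ Paths T :=
  ⟨Y, T.prefixOfSeq_path Y⟩

theorem prefixOfSeq_path_iff (n : ℕ) (b : Bool) :
    PrefixOfSeq (T.f (seg Y n ++ [b])) (T.path Y) ↔ b = Y n := by
  have hY : PrefixOfSeq (T.f (seg Y n ++ [Y n])) (T.path Y) :=
    seg_succ Y n ▸ T.prefixOfSeq_path Y (n + 1)
  refine ⟨fun hb => ?_, fun h => h ▸ hY⟩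
  by_contra hne
  exact T.not_prefix_or_prefix_of_ne _ hne (hb.prefix_or_prefix hY)

theorem apply_eq_decide_prefixOfSeq_path (n : ℕ) :
    Y n = decide (PrefixOfSeq (T.f (seg Y n ++ [true])) (T.path Y)) := by
  cases h : Y n <;> simp [T.prefixOfSeq_path_iff, h]

variable {T Y}

theorem tRed_path (h : TreeRedToReal T Y) : TRed (T.path Y) Y :=
  (RecIn.of_computable (Primrec.list_getD false).to_comp).comp
    (.pair (h.comp ((recIn_seg (.oracle Y)).comp (.of_computable .succ))) (.of_computable .id))

theorem tRed_of_path (h : TreeRedToReal T (T.path Y)) : TRed Y (T.path Y) :=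
  recIn_of_forall_eq ((recIn_decide_prefixOfSeq _).comp
    (h.comp (.of_computable (Computable.list_concat.comp .id (.const true)))))
    (T.apply_eq_decide_prefixOfSeq_path Y)

end FunTree

/-- for a recursively pointed function tree `T` and any `Y`, `T ≤_T Y` iff
some path of `T` is Turing equivalent to `Y`. -/
theorem stmt6 (T : FunTree) (hT : RecPointed T) (Y : Cantor) :
    TreeRedToReal T Y ↔ ∃ X ∈ Paths T, TEquiv X Y := by
  refine ⟨fun hTY => ?_, fun ⟨X, hX, hXY, _⟩ => (hT X hX).trans hXY⟩
  have hpath := T.path_mem_paths Y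
  exact ⟨T.path Y, hpath, FunTree.tRed_path hTY, FunTree.tRed_of_path (hT _ hpath)⟩
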